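/- (Recursive bound on successive differences of the proximal iterates) Consider the distributed proximal-gradient iterates x_i^(k), y_i^(k), q_i^(k), q̂_i^(k) for agents i = 1,…,m as defined in the context. Then for every k ≥ 2: Σ_{i=1}^m ‖x_i^(k) − x_i^(k−1)‖ ≤ 2·m·Γ·Σ_{l=1}^{k−1} γ^l·( Σ_{i=1}^m ‖q_i^(l)‖ ) + (k−1)·α·m·(G_g + G_h). -/
import Mathlib


open RealInnerProductSpace

theorem prox_subgrad' {d : ℕ} {h : EuclideanSpace ℝ (Fin d) → ℝ}
    (hhconv : ConvexOn ℝ Set.univ h) {α : ℝ} (hα : 0 < α)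
    (x a : EuclideanSpace ℝ (Fin d))
    (hmin : ∀ z, h x + (1 / (2 * α)) * ‖x - a‖ ^ 2 ≤ h z + (1 / (2 * α)) * ‖z - a‖ ^ 2) :
    ∀ u, h x + ⟪α⁻¹ • (a - x), u - x⟫ ≤ h u := by
  intro u
  have hc : (0:ℝ) < 1 / (2 * α) := by positivity
  set c : ℝ := 1 / (2 * α) with hcdef
  set I : ℝ := ⟪x - a, u - x⟫ with hI
  set N : ℝ := ‖u - x‖ ^ 2 with hN
  have hN0 : 0 ≤ N := by positivity
  have key : ∀ t : ℝ, 0 < t → t ≤ 1 → h x - h u ≤ 2 * c * I + c * t * N := by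
    intro t ht0 ht1
    have hcvx := hhconv.2 (Set.mem_univ x) (Set.mem_univ u)
      (by linarith : (0:ℝ) ≤ 1 - t) ht0.le (by ring)
    have hz := hmin ((1 - t) • x + t • u)
    have hzx : ((1 - t) • x + t • u) - a = (x - a) + t • (u - x) := by module
    have hnorm : ‖((1 - t) • x + t • u) - a‖ ^ 2
        = ‖x - a‖ ^ 2 + 2 * (t * I) + t ^ 2 * N := by
      rw [hzx, norm_add_sq_real, real_inner_smul_right, norm_smul, Real.norm_eq_abs,
        abs_of_pos ht0, hI, hN]
      ring
    rw [hnorm] at hz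
    have e : c * (‖x - a‖ ^ 2 + 2 * (t * I) + t ^ 2 * N)
        = c * ‖x - a‖ ^ 2 + t * (2 * c * I + c * t * N) := by ring
    rw [e] at hz
    simp only [smul_eq_mul] at hcvx
    have h2 : t * (h x - h u) ≤ t * (2 * c * I + c * t * N) := by nlinarith [hz, hcvx]
    exact le_of_mul_le_mul_left h2 ht0
  have main : h x - h u ≤ 2 * c * I := by
    refine le_of_forall_pos_le_add ?_
    intro ε hε
    have ht0 : 0 < min 1 (ε / (c * N + 1)) := by positivity
    have h1 := key _ ht0 (min_le_left _ _)
    have hcn : (0:ℝ) ≤ c * N := by positivity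
    have h3 : min 1 (ε / (c * N + 1)) ≤ ε / (c * N + 1) := min_le_right _ _
    have h4 : c * min 1 (ε / (c*N+1)) * N ≤ c * (ε / (c*N+1)) * N := by
      have := mul_le_mul_of_nonneg_left h3 hc.le
      nlinarith
    have heq : c * (ε / (c*N+1)) * N = (c*N*ε)/(c*N+1) := by ring
    have h5 : c * (ε / (c*N+1)) * N ≤ ε := by
      rw [heq, div_le_iff₀ (by positivity)]
      nlinarith
    linarith
  have hinner : ⟪α⁻¹ • (a - x), u - x⟫ = - (2 * c * I) := by
    rw [real_inner_smul_left]
    have h6 : ⟪a - x, u - x⟫ = -I := by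
      rw [hI, show a - x = -(x - a) by abel, inner_neg_left]
    rw [h6, hcdef]
    field_simp
  linarith [main, le_of_eq hinner]

theorem prox_nonexp' {d : ℕ} {h : EuclideanSpace ℝ (Fin d) → ℝ} {α : ℝ} (hα : 0 < α)
    (x a x' a' : EuclideanSpace ℝ (Fin d))
    (hx : ∀ u, h x + ⟪α⁻¹ • (a - x), u - x⟫ ≤ h u)
    (hx' : ∀ u, h x' + ⟪α⁻¹ • (a' - x'), u - x'⟫ ≤ h u) :
    ‖x - x'‖ ≤ ‖a - a'‖ := by
  have h1 := hx x'
  have h2 := hx' x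
  rw [real_inner_smul_left] at h1 h2
  have hia : (0:ℝ) < α⁻¹ := inv_pos.mpr hα
  have hsum : ⟪a - x, x' - x⟫ + ⟪a' - x', x - x'⟫ ≤ 0 := by
    nlinarith [h1, h2]
  have hkey : ‖x - x'‖ ^ 2 ≤ ⟪a - a', x - x'⟫ := by
    have e : ⟪a - x, x' - x⟫ + ⟪a' - x', x - x'⟫
        = ⟪a - a', x - x'⟫ * (-1) + ‖x - x'‖ ^ 2 := by
      simp only [inner_sub_left, inner_sub_right, norm_sub_sq_real,
        real_inner_self_eq_norm_sq]
      linarith [real_inner_comm x x', real_inner_comm a x', real_inner_comm a' x]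
    linarith [e ▸ hsum]
  have hcs := real_inner_le_norm (a - a') (x - x')
  have hnn : (0:ℝ) ≤ ‖x - x'‖ := norm_nonneg _
  rcases hnn.eq_or_lt with h0 | h0
  · rw [← h0]; exact norm_nonneg _
  · have : ‖x - x'‖ ^ 2 ≤ ‖a - a'‖ * ‖x - x'‖ := le_trans hkey hcs
    nlinarith

/-- Recursive bound on successive differences of the proximal iterates. -/
theorem sum_x_diff_bound {d m : ℕ} (hm : 1 ≤ m)
    (α L Gg Gh Γ γ : ℝ)
    (hα : 0 < α) (hL : 0 < L) (hGg : 0 < Gg) (hGh : 0 < Gh) (hΓ : 0 < Γ)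
    (hγ0 : 0 < γ) (hγ1 : γ < 1)
    -- the differentiable local objectives and their gradients
    (g : Fin m → EuclideanSpace ℝ (Fin d) → ℝ)
    (g' : Fin m → EuclideanSpace ℝ (Fin d) → EuclideanSpace ℝ (Fin d))
    (hgconv : ∀ i, ConvexOn ℝ Set.univ (g i))
    (hgrad : ∀ i z, HasGradientAt (g i) (g' i z) z)
    (hLip : ∀ i z w, ‖g' i z - g' i w‖ ≤ L * ‖z - w‖)
    (hGgrad : ∀ i z, ‖g' i z‖ ≤ Gg)
    -- the common nondifferentiable objective, with bounded subgradients
    (h : EuclideanSpace ℝ (Fin d) → ℝ)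
    (hhconv : ConvexOn ℝ Set.univ h)
    (hsub : ∀ x z : EuclideanSpace ℝ (Fin d),
      (∀ u, h x + ⟪z, u - x⟫ ≤ h u) → ‖z‖ ≤ Gh)
    -- the consensus weight matrices
    (lam : ℕ → Fin m → Fin m → ℝ)
    (hlam_nonneg : ∀ k, 1 ≤ k → ∀ i j, 0 ≤ lam k i j)
    (hlam_row : ∀ k, 1 ≤ k → ∀ i, ∑ j, lam k i j = 1)
    (hlam_col : ∀ k, 1 ≤ k → ∀ j, ∑ i, lam k i j = 1)
    (hlam_close : ∀ k, 1 ≤ k → ∀ i j, |lam k i j - 1 / m| ≤ Γ * γ ^ k)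
    -- the iterates
    (x y q qhat : ℕ → Fin m → EuclideanSpace ℝ (Fin d))
    (hq : ∀ k, 1 ≤ k → ∀ i, q k i = y (k - 1) i - α • g' i (y (k - 1) i))
    (hqhat : ∀ k, 1 ≤ k → ∀ i, qhat k i = ∑ j, lam k i j • q k j)
    (hx : ∀ k, 1 ≤ k → ∀ i, ∀ z : EuclideanSpace ℝ (Fin d),
      h (x k i) + (1 / (2 * α)) * ‖x k i - qhat k i‖ ^ 2 ≤
        h z + (1 / (2 * α)) * ‖z - qhat k i‖ ^ 2)
    (hy : ∀ k, 1 ≤ k → ∀ i,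
      y k i = x k i + (((k : ℝ) - 1) / ((k : ℝ) + 2)) • (x k i - x (k - 1) i))
    :
    ∀ k, 2 ≤ k →
      ∑ i, ‖x k i - x (k - 1) i‖ ≤
        2 * m * Γ * ∑ l ∈ Finset.Icc 1 (k - 1), γ ^ l * ∑ i, ‖q l i‖
          + ((k : ℝ) - 1) * α * m * (Gg + Gh) := by
  -- subgradient property at every prox point
  have hsg : ∀ k, 1 ≤ k → ∀ i, ∀ u,
      h (x k i) + ⟪α⁻¹ • (qhat k i - x k i), u - x k i⟫ ≤ h u :=
    fun k hk i => prox_subgrad' hhconv hα (x k i) (qhat k i) (fun z => hx k hk i z)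
  -- distance from x to qhat is at most α * Gh
  have hxq : ∀ k, 1 ≤ k → ∀ i, ‖x k i - qhat k i‖ ≤ α * Gh := by
    intro k hk i
    have hz := hsub (x k i) (α⁻¹ • (qhat k i - x k i)) (hsg k hk i)
    rw [norm_smul, Real.norm_eq_abs, abs_of_pos (inv_pos.mpr hα)] at hz
    have h7 := mul_le_mul_of_nonneg_left hz hα.le
    rw [← mul_assoc, mul_inv_cancel₀ hα.ne', one_mul] at h7
    rw [norm_sub_rev]
    exact h7
  -- nonexpansiveness of prox
  have hne : ∀ k, 1 ≤ k → ∀ i j, ‖x k i - x k j‖ ≤ ‖qhat k i - qhat k j‖ :=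
    fun k hk i j => prox_nonexp' hα _ _ _ _ (hsg k hk i) (hsg k hk j)
  -- consensus bound on qhat differences
  have hqd : ∀ k, 1 ≤ k → ∀ i j,
      ‖qhat k i - qhat k j‖ ≤ 2 * Γ * γ ^ k * ∑ s, ‖q k s‖ := by
    intro k hk i j
    rw [hqhat k hk i, hqhat k hk j, ← Finset.sum_sub_distrib]
    calc ‖∑ s, (lam k i s • q k s - lam k j s • q k s)‖
        ≤ ∑ s, ‖lam k i s • q k s - lam k j s • q k s‖ := norm_sum_le _ _
      _ ≤ ∑ s, 2 * Γ * γ ^ k * ‖q k s‖ := by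
          refine Finset.sum_le_sum fun s _ => ?_
          rw [← sub_smul, norm_smul, Real.norm_eq_abs]
          have habs : |lam k i s - lam k j s| ≤ 2 * Γ * γ ^ k := by
            have e : lam k i s - lam k j s
                = (lam k i s - 1 / m) - (lam k j s - 1 / m) := by ring
            calc |lam k i s - lam k j s| ≤ |lam k i s - 1/m| + |lam k j s - 1/m| := by
                  rw [e]; exact abs_sub _ _
              _ ≤ Γ * γ ^ k + Γ * γ ^ k := add_le_add (hlam_close k hk i s) (hlam_close k hk j s)
              _ = 2 * Γ * γ ^ k := by ring
          exact mul_le_mul_of_nonneg_right habs (norm_nonneg _)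
      _ = 2 * Γ * γ ^ k * ∑ s, ‖q k s‖ := by rw [Finset.mul_sum]
  -- the one-step recursive estimate
  have hstep : ∀ k, 2 ≤ k →
      ∑ i, ‖x k i - x (k-1) i‖ ≤
        ((↑(k-1) : ℝ) - 1) / ((↑(k-1) : ℝ) + 2) * ∑ i, ‖x (k-1) i - x (k-1-1) i‖
          + 2 * ↑m * Γ * γ ^ (k-1) * ∑ i, ‖q (k-1) i‖ + α * ↑m * (Gg + Gh) := by
    intro k hk
    have hk1 : 1 ≤ k := by omega
    have hk1' : 1 ≤ k - 1 := by omega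
    set β : ℝ := ((↑(k-1) : ℝ) - 1) / ((↑(k-1) : ℝ) + 2) with hβdef
    have hβ0 : 0 ≤ β := by
      apply div_nonneg
      · have : (1:ℝ) ≤ (↑(k-1) : ℝ) := by exact_mod_cast hk1'
        linarith
      · positivity
    set Q : ℝ := ∑ s, ‖q (k-1) s‖ with hQdef
    set C : ℝ := 2 * Γ * γ ^ (k-1) * Q + α * Gg with hCdef
    -- per-agent bound
    have per : ∀ i, ‖x k i - x (k-1) i‖ ≤
        α * Gh + C + β * ∑ j, lam k i j * ‖x (k-1) j - x (k-1-1) j‖ := by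
      intro i
      have hrow := hlam_row k hk1 i
      have hd1 : ‖x k i - x (k-1) i‖ ≤
          ‖x k i - qhat k i‖ + ‖qhat k i - x (k-1) i‖ := by
        have : x k i - x (k-1) i = (x k i - qhat k i) + (qhat k i - x (k-1) i) := by abel
        rw [this]; exact norm_add_le _ _
      have hqx : qhat k i - x (k-1) i = ∑ j, lam k i j • (q k j - x (k-1) i) := by
        rw [hqhat k hk1 i]
        simp_rw [smul_sub, Finset.sum_sub_distrib, ← Finset.sum_smul, hrow, one_smul]
      have hterm : ∀ j, ‖q k j - x (k-1) i‖ ≤ C + β * ‖x (k-1) j - x (k-1-1) j‖ := by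
        intro j
        have hyj := hy (k-1) hk1' j
        have hqj := hq k hk1 j
        have hdec : q k j - x (k-1) i =
            (x (k-1) j - x (k-1) i) + β • (x (k-1) j - x (k-1-1) j)
              - α • g' j (y (k-1) j) := by
          rw [hqj, hyj, hβdef]; module
        calc ‖q k j - x (k-1) i‖
            ≤ ‖x (k-1) j - x (k-1) i‖ + ‖β • (x (k-1) j - x (k-1-1) j)‖
              + ‖α • g' j (y (k-1) j)‖ := by
              rw [hdec]
              have t1 := norm_sub_le
                (x (k-1) j - x (k-1) i + β • (x (k-1) j - x (k-1-1) j))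
                (α • g' j (y (k-1) j))
              have t2 := norm_add_le (x (k-1) j - x (k-1) i)
                (β • (x (k-1) j - x (k-1-1) j))
              linarith
          _ ≤ 2 * Γ * γ ^ (k-1) * Q + β * ‖x (k-1) j - x (k-1-1) j‖ + α * Gg := by
              have e1 : ‖x (k-1) j - x (k-1) i‖ ≤ 2 * Γ * γ ^ (k-1) * Q :=
                le_trans (hne (k-1) hk1' j i) (hqd (k-1) hk1' j i)
              have e2 : ‖β • (x (k-1) j - x (k-1-1) j)‖ = β * ‖x (k-1) j - x (k-1-1) j‖ := by
                rw [norm_smul, Real.norm_eq_abs, abs_of_nonneg hβ0]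
              have e3 : ‖α • g' j (y (k-1) j)‖ ≤ α * Gg := by
                rw [norm_smul, Real.norm_eq_abs, abs_of_pos hα]
                exact mul_le_mul_of_nonneg_left (hGgrad j _) hα.le
              linarith [le_of_eq e2]
          _ = C + β * ‖x (k-1) j - x (k-1-1) j‖ := by rw [hCdef]; ring
      have hqxb : ‖qhat k i - x (k-1) i‖ ≤ C + β * ∑ j, lam k i j * ‖x (k-1) j - x (k-1-1) j‖ := by
        rw [hqx]
        calc ‖∑ j, lam k i j • (q k j - x (k-1) i)‖
            ≤ ∑ j, ‖lam k i j • (q k j - x (k-1) i)‖ := norm_sum_le _ _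
          _ ≤ ∑ j, lam k i j * (C + β * ‖x (k-1) j - x (k-1-1) j‖) := by
              refine Finset.sum_le_sum fun j _ => ?_
              rw [norm_smul, Real.norm_eq_abs, abs_of_nonneg (hlam_nonneg k hk1 i j)]
              exact mul_le_mul_of_nonneg_left (hterm j) (hlam_nonneg k hk1 i j)
          _ = C + β * ∑ j, lam k i j * ‖x (k-1) j - x (k-1-1) j‖ := by
              have e4 : ∀ j : Fin m, lam k i j * (C + β * ‖x (k-1) j - x (k-1-1) j‖)
                  = C * lam k i j + β * (lam k i j * ‖x (k-1) j - x (k-1-1) j‖) :=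
                fun j => by ring
              rw [Finset.sum_congr rfl fun j _ => e4 j, Finset.sum_add_distrib,
                ← Finset.mul_sum, ← Finset.mul_sum, hrow, mul_one]
      linarith [hxq k hk1 i]
    -- sum over agents
    have hsum : ∑ i, ‖x k i - x (k-1) i‖ ≤
        ∑ i : Fin m, (α * Gh + C + β * ∑ j, lam k i j * ‖x (k-1) j - x (k-1-1) j‖) :=
      Finset.sum_le_sum fun i _ => per i
    have hcol : ∑ i : Fin m, ∑ j, lam k i j * ‖x (k-1) j - x (k-1-1) j‖
        = ∑ j, ‖x (k-1) j - x (k-1-1) j‖ := by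
      rw [Finset.sum_comm]
      refine Finset.sum_congr rfl fun j _ => ?_
      rw [← Finset.sum_mul, hlam_col k hk1 j, one_mul]
    have hexp : ∑ i : Fin m, (α * Gh + C + β * ∑ j, lam k i j * ‖x (k-1) j - x (k-1-1) j‖)
        = ↑m * (α * Gh + C) + β * ∑ j, ‖x (k-1) j - x (k-1-1) j‖ := by
      simp only [Finset.sum_add_distrib, Finset.sum_const, Finset.card_univ,
        Fintype.card_fin, nsmul_eq_mul, ← Finset.mul_sum]
      rw [hcol]
      ring
    rw [hexp] at hsum
    refine le_trans hsum (le_of_eq ?_)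
    rw [hCdef]; ring
  -- main induction
  intro k hk
  induction k, hk using Nat.le_induction with
  | base =>
      have h2 := hstep 2 (le_refl 2)
      norm_num at h2 ⊢
      linarith
  | succ n hn ih =>
      obtain ⟨p, rfl⟩ : ∃ p, n = p + 2 := ⟨n - 2, by omega⟩
      have hs := hstep (p + 2 + 1) (by omega)
      have hD0 : (0:ℝ) ≤ ∑ i, ‖x (p+2) i - x (p+1) i‖ :=
        Finset.sum_nonneg fun i _ => norm_nonneg _
      have hβle : ((↑(p+2) : ℝ) - 1) / ((↑(p+2) : ℝ) + 2) ≤ 1 := by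
        rw [div_le_one (by positivity)]
        push_cast; linarith
      have hβ0 : (0:ℝ) ≤ ((↑(p+2) : ℝ) - 1) / ((↑(p+2) : ℝ) + 2) := by
        apply div_nonneg
        · push_cast; linarith
        · positivity
      simp only [Nat.add_sub_cancel] at hs ih ⊢
      have hn1 : p + 2 - 1 = p + 1 := by omega
      rw [hn1] at hs ih
      have hicc : ∑ l ∈ Finset.Icc 1 (p+2), γ ^ l * ∑ i, ‖q l i‖
          = (∑ l ∈ Finset.Icc 1 (p+1), γ ^ l * ∑ i, ‖q l i‖)
            + γ ^ (p+2) * ∑ i, ‖q (p+2) i‖ := by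
        rw [Finset.sum_Icc_succ_top (by omega : 1 ≤ p + 2)]
      rw [hicc]
      have hβS : ((↑(p+2) : ℝ) - 1) / ((↑(p+2) : ℝ) + 2) * ∑ i, ‖x (p+2) i - x (p+1) i‖
          ≤ ∑ i, ‖x (p+2) i - x (p+1) i‖ := by
        nlinarith
      have c1 : ∑ i, ‖x (p+2+1) i - x (p+2) i‖ ≤
          ∑ i, ‖x (p+2) i - x (p+1) i‖
            + 2 * ↑m * Γ * γ ^ (p+2) * ∑ i, ‖q (p+2) i‖ + α * ↑m * (Gg + Gh) := by
        nlinarith [hs, hβS]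
      push_cast at c1 ih ⊢
      linarith [c1, ih]
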